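/- arXiv:2007.12323 — 4 statements merged into one kernel-verified Lean document; each statement's English description precedes it below -/
import Mathlib

section
/- Let S be a finite collection of subsets of a ground set, and T a set such that every S ∈ S contains T. Suppose that ∑_{S₁,S₂ ∈ S} (2^{|(S₁∩S₂)\T|} − 1) ≥ |S|²/4 (sum over ordered pairs). Then there exists an integer k ≥ 1 such that the number of ordered pairs (S₁,S₂) ∈ S×S with |(S₁∩S₂)\T| = k is at least |S|²/(4·2^{2k}). -/
/-!
Group the ordered pairs by `k = |(S₁ ∩ S₂) \ T|`. If each level `k ≥ 1` held fewer than
`c / 4^k` pairs, with `c = |𝒮|²/4`, it would contribute less than `c (2^k - 1) / 4^k ≤ c / 2^k`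
to the sum, and these contributions add up to less than `c`.
-/

open Finset

theorem sum_half_pow_lt_one {I : Finset ℕ} (hI : ∀ k ∈ I, 1 ≤ k) :
    ∑ k ∈ I, (1 / 2 : ℝ) ^ k < 1 := by
  obtain ⟨N, hsub⟩ : ∃ N, I ⊆ (range (N + 1)).erase 0 := ⟨I.sup id, fun k hk =>
    mem_erase.2 ⟨Nat.one_le_iff_ne_zero.1 (hI k hk),
      mem_range.2 (Nat.lt_succ_of_le (le_sup (f := id) hk))⟩⟩
  calc ∑ k ∈ I, (1 / 2 : ℝ) ^ k
      ≤ ∑ k ∈ (range (N + 1)).erase 0, (1 / 2 : ℝ) ^ k :=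
        sum_le_sum_of_subset_of_nonneg hsub fun _ _ _ => by positivity
    _ = 1 - (1 / 2) ^ N := by
        rw [sum_erase_eq_sub (mem_range.2 N.succ_pos), geom_sum_eq (by norm_num), pow_succ]
        ring
    _ < 1 := by linarith [pow_pos (by norm_num : (0 : ℝ) < 1 / 2) N]

theorem sum_two_pow_sub_one_lt_of_card_fiber_lt {α : Type*} (s : Finset α) (f : α → ℕ) {c : ℝ}
    (h : ∀ k, 1 ≤ k → (#{a ∈ s | f a = k} : ℝ) < c / 4 ^ k) :
    ∑ a ∈ s, ((2 : ℝ) ^ f a - 1) < c := by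
  have hc : 0 < c := by linarith [h 1 le_rfl, (#{a ∈ s | f a = 1}).cast_nonneg (α := ℝ)]
  have hterm : ∀ k, 1 ≤ k → (#{a ∈ s | f a = k} : ℝ) * (2 ^ k - 1) ≤ c * (1 / 2) ^ k := by
    intro k hk
    have h2k : (1 : ℝ) ≤ 2 ^ k := one_le_pow₀ (by norm_num)
    calc (#{a ∈ s | f a = k} : ℝ) * (2 ^ k - 1) ≤ c / 4 ^ k * (2 ^ k - 1) := by
          gcongr
          exact (h k hk).le
      _ ≤ c / 4 ^ k * 2 ^ k := by gcongr; linarith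
      _ = c * (1 / 2) ^ k := by
          rw [show (4 : ℝ) ^ k = 2 ^ k * 2 ^ k by rw [← mul_pow]; norm_num, one_div_pow]
          field_simp
  calc ∑ a ∈ s, ((2 : ℝ) ^ f a - 1)
      = ∑ k ∈ s.image f with 1 ≤ k, (#{a ∈ s | f a = k} : ℝ) * (2 ^ k - 1) := by
        rw [sum_comp (fun k => (2 : ℝ) ^ k - 1) f, sum_filter_of_ne]
        · simp only [nsmul_eq_mul]
        · intro k _ hk
          by_contra! hk0
          simp [Nat.lt_one_iff.1 hk0] at hk
    _ ≤ ∑ k ∈ s.image f with 1 ≤ k, c * (1 / 2) ^ k :=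
        sum_le_sum fun k hk => hterm k (mem_filter.1 hk).2
    _ < c := by
        rw [← mul_sum]
        exact mul_lt_of_lt_one_right hc (sum_half_pow_lt_one fun k hk => (mem_filter.1 hk).2)

theorem stmt0_general {V : Type*} [DecidableEq V] (𝒮 : Finset (Finset V)) (T : Finset V)
    (hsum : ((𝒮.card : ℝ) ^ 2) / 4 ≤
      ∑ S₁ ∈ 𝒮, ∑ S₂ ∈ 𝒮, ((2 : ℝ) ^ ((S₁ ∩ S₂) \ T).card - 1)) :
    ∃ k : ℕ, 1 ≤ k ∧
      ((𝒮.card : ℝ) ^ 2) / (4 * 2 ^ (2 * k)) ≤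
        (((𝒮 ×ˢ 𝒮).filter fun p => ((p.1 ∩ p.2) \ T).card = k).card : ℝ) := by
  by_contra! hsparse
  have hlt := sum_two_pow_sub_one_lt_of_card_fiber_lt (𝒮 ×ˢ 𝒮) (fun p => ((p.1 ∩ p.2) \ T).card)
    (c := (𝒮.card : ℝ) ^ 2 / 4) fun k hk => by
      rw [div_div, show (4 : ℝ) ^ k = 2 ^ (2 * k) by rw [pow_mul]; norm_num]
      exact hsparse k hk
  rw [sum_product] at hlt
  linarith

/-- If the sum over ordered pairs of `2^{|(S₁∩S₂)\T|} - 1` is at least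
`|𝒮|²/4`, then some level `k ≥ 1` has at least `|𝒮|²/(4·2^{2k})` ordered pairs
intersecting on exactly `k` elements outside `T`. -/
theorem stmt0 {V : Type*} [DecidableEq V] (𝒮 : Finset (Finset V)) (T : Finset V)
    (hT : ∀ S ∈ 𝒮, T ⊆ S)
    (hsum : ((𝒮.card : ℝ) ^ 2) / 4 ≤
      ∑ S₁ ∈ 𝒮, ∑ S₂ ∈ 𝒮, ((2 : ℝ) ^ ((S₁ ∩ S₂) \ T).card - 1)) :
    ∃ k : ℕ, 1 ≤ k ∧
      ((𝒮.card : ℝ) ^ 2) / (4 * 2 ^ (2 * k)) ≤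
        (((𝒮 ×ˢ 𝒮).filter fun p => ((p.1 ∩ p.2) \ T).card = k).card : ℝ) :=
  stmt0_general 𝒮 T hsum
end

section
/- For every real α with 0 < α ≤ 1/2, the infinite product ∏_{x=1}^{∞} 1/(1−(1−α)^x) is at most 2^{6/α}. -/
/-!
Split the product at `m = ⌊1/α⌋`. For `x ≤ m` we have `αx ≤ 1`, so
`(1 - α)^x ≤ e^{-αx} ≤ 1 - αx/2` and the factor is at most `2/(αx)`; these factors multiply to
at most `(2/α)^m / m! ≤ e^{2/α}`. For `x > m` we have `(1 - α)^x ≤ e^{-1} ≤ 1/2`, so the factor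
is at most `e^{2(1-α)^x}`, and the geometric tail sums to at most `(1 - α)^{m+1}/α ≤ 1/(2α)`,
giving `e^{1/α}`. Finally `e^{3/α} ≤ 2^{6/α}` because `log 2 > 1/2`.
-/

open Finset Real
open scoped Nat

lemma inv_one_add_le_one_sub_half {t : ℝ} (ht0 : 0 ≤ t) (ht1 : t ≤ 1) :
    (1 + t)⁻¹ ≤ 1 - t / 2 := by
  rw [inv_le_iff_one_le_mul₀' (by linarith)]
  nlinarith

lemma exp_neg_le_one_sub_half {t : ℝ} (ht0 : 0 ≤ t) (ht1 : t ≤ 1) :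
    exp (-t) ≤ 1 - t / 2 :=
  calc exp (-t) = (exp t)⁻¹ := exp_neg t
    _ ≤ (1 + t)⁻¹ := inv_anti₀ (by linarith) (by linarith [add_one_le_exp t])
    _ ≤ 1 - t / 2 := inv_one_add_le_one_sub_half ht0 ht1

lemma one_sub_pow_le_exp_neg_mul {α : ℝ} (hα : α ≤ 1) (n : ℕ) :
    (1 - α) ^ n ≤ exp (-(α * n)) := by
  calc (1 - α) ^ n ≤ exp (-α) ^ n := pow_le_pow_left₀ (by linarith) (one_sub_le_exp_neg α) n
    _ = exp (-(α * n)) := by rw [← exp_nat_mul]; ring_nf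

lemma one_sub_pow_le_half {α : ℝ} (hα : α ≤ 1) {n : ℕ} (hn : 1 ≤ α * n) :
    (1 - α) ^ n ≤ 1 / 2 := by
  have he : 2 ≤ exp 1 := by linarith [exp_one_gt_d9]
  calc (1 - α) ^ n ≤ exp (-(α * n)) := one_sub_pow_le_exp_neg_mul hα n
    _ ≤ exp (-1) := exp_le_exp.2 (by linarith)
    _ = (exp 1)⁻¹ := exp_neg 1
    _ ≤ 1 / 2 := by rw [one_div]; exact inv_anti₀ two_pos he

lemma one_le_one_div_one_sub_pow {q : ℝ} (hq0 : 0 ≤ q) (hq1 : q < 1) {n : ℕ} (hn : n ≠ 0) :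
    1 ≤ 1 / (1 - q ^ n) :=
  one_le_one_div (sub_pos.2 (pow_lt_one₀ hq0 hq1 hn)) (by linarith [pow_nonneg hq0 n])

lemma one_div_one_sub_pow_le_of_mul_le_one {α : ℝ} (hα0 : 0 < α) (hα1 : α ≤ 1) {n : ℕ}
    (hn : n ≠ 0) (hαn : α * n ≤ 1) : 1 / (1 - (1 - α) ^ n) ≤ 2 / (α * n) := by
  have hαn0 : 0 < α * n := by positivity
  have hpow : (1 - α) ^ n ≤ 1 - α * n / 2 :=
    (one_sub_pow_le_exp_neg_mul hα1 n).trans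
      (exp_neg_le_one_sub_half hαn0.le hαn)
  calc 1 / (1 - (1 - α) ^ n) ≤ 1 / (α * n / 2) :=
        one_div_le_one_div_of_le (by positivity) (by linarith)
    _ = 2 / (α * n) := one_div_div _ _

lemma one_div_one_sub_le_exp_two_mul {ε : ℝ} (h0 : 0 ≤ ε) (h1 : ε ≤ 1 / 2) :
    1 / (1 - ε) ≤ exp (2 * ε) := by
  have : 1 / (1 - ε) ≤ 1 + 2 * ε := by
    rw [div_le_iff₀ (by linarith)]
    nlinarith
  linarith [add_one_le_exp (2 * ε)]

lemma prod_range_one_div_one_sub_pow_le {α : ℝ} (hα0 : 0 < α) (hα1 : α ≤ 1) {m : ℕ}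
    (hm : α * m ≤ 1) :
    ∏ x ∈ range m, 1 / (1 - (1 - α) ^ (x + 1)) ≤ exp (2 / α) := by
  have hfactor : ∀ x ∈ range m, 1 / (1 - (1 - α) ^ (x + 1)) ≤ 2 / α / ((x : ℝ) + 1) := by
    intro x hx
    have hxm : (x : ℝ) + 1 ≤ m := by exact_mod_cast mem_range.1 hx
    have h := one_div_one_sub_pow_le_of_mul_le_one hα0 hα1 x.succ_ne_zero (by push_cast; nlinarith)
    rwa [Nat.cast_succ, ← div_div] at h
  have hfact : ∏ x ∈ range m, ((x : ℝ) + 1) = m ! := by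
    exact_mod_cast prod_range_add_one_eq_factorial m
  calc ∏ x ∈ range m, 1 / (1 - (1 - α) ^ (x + 1))
      ≤ ∏ x ∈ range m, 2 / α / ((x : ℝ) + 1) :=
        prod_le_prod (fun x _ => (one_le_one_div_one_sub_pow (by linarith) (by linarith)
          x.succ_ne_zero).trans' zero_le_one) hfactor
    _ = (2 / α) ^ m / m ! := by
        rw [prod_div_distrib, prod_const, card_range, hfact]
    _ ≤ exp (2 / α) := pow_div_factorial_le_exp _ (by positivity) m

lemma prod_Ico_one_div_one_sub_pow_le {α : ℝ} (hα0 : 0 < α) (hα1 : α ≤ 1) {m : ℕ}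
    (hm : 1 ≤ α * (m + 1)) (N : ℕ) :
    ∏ x ∈ Ico m N, 1 / (1 - (1 - α) ^ (x + 1)) ≤ exp (1 / α) := by
  have hq0 : 0 ≤ 1 - α := by linarith
  have hsmall : ∀ x ∈ Ico m N, (1 - α) ^ (x + 1) ≤ 1 / 2 := by
    intro x hx
    have hmx : (m : ℝ) ≤ x := by exact_mod_cast (mem_Ico.1 hx).1
    exact one_sub_pow_le_half hα1 (by push_cast; nlinarith)
  have hgeom : ∑ x ∈ Ico m N, (1 - α) ^ (x + 1) ≤ (1 - α) ^ (m + 1) / α := by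
    simp_rw [pow_succ', ← mul_sum]
    calc (1 - α) * ∑ x ∈ Ico m N, (1 - α) ^ x ≤ (1 - α) * ((1 - α) ^ m / (1 - (1 - α))) :=
          mul_le_mul_of_nonneg_left (geom_sum_Ico_le_of_lt_one hq0 (by linarith)) hq0
      _ = (1 - α) * (1 - α) ^ m / α := by ring
  have hm' : (1 - α) ^ (m + 1) ≤ 1 / 2 := one_sub_pow_le_half hα1 (by exact_mod_cast hm)
  calc ∏ x ∈ Ico m N, 1 / (1 - (1 - α) ^ (x + 1))
      ≤ ∏ x ∈ Ico m N, exp (2 * (1 - α) ^ (x + 1)) :=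
        prod_le_prod (fun x _ => (one_le_one_div_one_sub_pow hq0 (by linarith)
          x.succ_ne_zero).trans' zero_le_one)
          fun x hx => one_div_one_sub_le_exp_two_mul (pow_nonneg hq0 _) (hsmall x hx)
    _ = exp (2 * ∑ x ∈ Ico m N, (1 - α) ^ (x + 1)) := by rw [mul_sum, exp_sum]
    _ ≤ exp (1 / α) := by
        gcongr
        calc 2 * ∑ x ∈ Ico m N, (1 - α) ^ (x + 1) ≤ 2 * ((1 / 2) / α) := by
              gcongr; exact hgeom.trans (div_le_div_of_nonneg_right hm' hα0.le)
          _ = 1 / α := by ring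

lemma exp_le_two_rpow_two_mul (x : ℝ) (hx : 0 ≤ x) : exp x ≤ 2 ^ (2 * x) := by
  rw [rpow_def_of_pos two_pos]
  gcongr
  nlinarith [log_two_gt_d9]

/-- For `0 < α ≤ 1/2`, `∏_{x=1}^∞ 1/(1-(1-α)^x) ≤ 2^{6/α}`. -/
theorem stmt4 (α : ℝ) (hα0 : 0 < α) (hα1 : α ≤ 1 / 2) :
    (∏' x : ℕ, 1 / (1 - (1 - α) ^ (x + 1))) ≤ (2 : ℝ) ^ (6 / α) := by
  have hf : ∀ x : ℕ, 1 ≤ 1 / (1 - (1 - α) ^ (x + 1)) := fun x =>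
    one_le_one_div_one_sub_pow (by linarith) (by linarith) x.succ_ne_zero
  -- bounding every finite subproduct also covers the non-multipliable case, where `∏'` is `1`
  refine tprod_le_of_prod_le' (one_le_rpow one_le_two (by positivity)) fun s => ?_
  set m := ⌊1 / α⌋₊
  have hm : α * m ≤ 1 := by
    rw [← le_div_iff₀' hα0]; exact Nat.floor_le (by positivity)
  have hm1 : 1 ≤ α * (m + 1) := by
    rw [← div_le_iff₀' hα0]; exact (Nat.lt_floor_add_one _).le
  obtain ⟨N, hN⟩ := (s ∪ range m).exists_nat_subset_range
  have hmN : m ≤ N := range_subset_range.1 (subset_union_right.trans hN)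
  calc ∏ x ∈ s, 1 / (1 - (1 - α) ^ (x + 1))
      ≤ ∏ x ∈ range N, 1 / (1 - (1 - α) ^ (x + 1)) :=
        prod_le_prod_of_subset_of_one_le (subset_union_left.trans hN)
          (fun x _ => zero_le_one.trans (hf x)) fun x _ _ => hf x
    _ = (∏ x ∈ range m, 1 / (1 - (1 - α) ^ (x + 1))) *
          ∏ x ∈ Ico m N, 1 / (1 - (1 - α) ^ (x + 1)) := (prod_range_mul_prod_Ico _ hmN).symm
    _ ≤ exp (2 / α) * exp (1 / α) :=
        mul_le_mul (prod_range_one_div_one_sub_pow_le hα0 (by linarith) hm)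
          (prod_Ico_one_div_one_sub_pow_le hα0 (by linarith) hm1 N)
          (prod_nonneg fun x _ => zero_le_one.trans (hf x)) (exp_pos _).le
    _ = exp (3 / α) := by rw [← exp_add]; ring_nf
    _ ≤ 2 ^ (6 / α) := by
        convert exp_le_two_rpow_two_mul (3 / α) (by positivity) using 2; ring
end

section
/- Let m ≥ 2, δ ∈ (0,1), α = 16/log₂(1/δ) with α ≤ 1/2, and define t_r = ⌈m(1−(1−α)^r) + 2r⌉ for r = 0,...,R−1 where R = ⌊(1/(16α))·log₂ m⌋. If δ > exp(−m^{3/4}) (so that the construction is valid), then for all r < R−1: t_{r+1} − t_r ≥ 1, and t_{R−1} < m. -/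
/-!
Consecutive terms are ceilings of reals that are at least `2` apart, since
`t_{r+1} - t_r` is `mα(1-α)^r + 2` before rounding. For the last term `r = R - 1` it suffices that
`2r + 1 ≤ m(1-α)^r`. Convexity of `exp` gives `1 - α ≥ 2^{-2α}` for `α ≤ 1/2`, and
`16αR ≤ log₂ m`, so `m(1-α)^r ≥ m · m^{-1/8} = m^{7/8}`. On the other hand
`R ≤ log₂(1/δ) · log₂ m / 256`, where `log(1/δ) < m^{3/4}` and `log m ≤ 8 m^{1/8}`, so
`2R ≤ m^{7/8}`.
-/

open Real

theorem exp_neg_mul_log_two_le_one_sub_half {θ : ℝ} (h0 : 0 ≤ θ) (h1 : θ ≤ 1) :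
    exp (-(θ * log 2)) ≤ 1 - θ / 2 := by
  have hchord := convexOn_exp.2 (Set.mem_univ (-log 2)) (Set.mem_univ 0) h0 (sub_nonneg.2 h1)
    (add_sub_cancel θ 1)
  simp only [smul_eq_mul, mul_zero, add_zero, exp_zero, exp_neg, exp_log two_pos, mul_neg] at hchord
  rw [exp_neg]
  linarith

theorem rpow_seven_eighths_le_mul_one_sub_pow {m α : ℝ} (hm : 0 < m) (hα0 : 0 ≤ α)
    (hα : α ≤ 1 / 2) {r : ℕ} (hr : 16 * α * r ≤ logb 2 m) :
    m ^ (7 / 8 : ℝ) ≤ m * (1 - α) ^ r := by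
  have hpow : exp (-(log m / 8)) ≤ (1 - α) ^ r := calc
    exp (-(log m / 8)) ≤ exp (-(2 * α * log 2)) ^ r := by
      rw [← exp_nat_mul, exp_le_exp]
      have := (le_div_iff₀ (log_pos one_lt_two)).1 hr
      nlinarith
    _ ≤ (1 - α) ^ r := by
      gcongr
      simpa using exp_neg_mul_log_two_le_one_sub_half (θ := 2 * α) (by linarith) (by linarith)
  calc m ^ (7 / 8 : ℝ) = m * exp (-(log m / 8)) := by
        nth_rewrite 2 [← exp_log hm]
        rw [rpow_def_of_pos hm, ← exp_add]
        ring_nf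
    _ ≤ m * (1 - α) ^ r := by gcongr

theorem logb_two_mul_logb_two_le_rpow_seven_eighths {m y : ℝ} (hm : 0 ≤ m) (hy : 1 ≤ y)
    (hlog : log y ≤ m ^ (3 / 4 : ℝ)) : logb 2 y * logb 2 m ≤ 32 * m ^ (7 / 8 : ℝ) := by
  have hlog2 : 1 / 4 ≤ log 2 * log 2 := by nlinarith [log_two_gt_d9]
  have hlogy : 0 ≤ log y := log_nonneg hy
  have hlogm : log m ≤ 8 * m ^ (1 / 8 : ℝ) := by
    linarith [log_le_rpow_div hm (by norm_num : (0 : ℝ) < 1 / 8)]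
  have hsplit : m ^ (7 / 8 : ℝ) = m ^ (3 / 4 : ℝ) * m ^ (1 / 8 : ℝ) := by
    rw [← rpow_add' hm (by norm_num)]; norm_num
  have hm18 : 0 ≤ m ^ (1 / 8 : ℝ) := rpow_nonneg hm _
  rw [logb, logb, div_mul_div_comm, div_le_iff₀ (by positivity [log_pos one_lt_two])]
  calc log y * log m ≤ 8 * (log y * m ^ (1 / 8 : ℝ)) := by nlinarith
    _ ≤ 8 * m ^ (7 / 8 : ℝ) := by rw [hsplit]; nlinarith
    _ ≤ 32 * m ^ (7 / 8 : ℝ) * (log 2 * log 2) := by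
      nlinarith [rpow_nonneg hm (7 / 8 : ℝ)]

theorem ceil_add_two_le_ceil_succ {m α : ℝ} (hm : 0 ≤ m) (hα0 : 0 ≤ α) (hα1 : α ≤ 1)
    (r : ℕ) :
    ⌈m * (1 - (1 - α) ^ r) + 2 * r⌉ + 2 ≤
      ⌈m * (1 - (1 - α) ^ (r + 1)) + 2 * (r + 1 : ℕ)⌉ := by
  rw [← Int.ceil_add_ofNat]
  apply Int.ceil_mono
  have : 0 ≤ m * (1 - α) ^ r * α := by positivity
  push_cast
  nlinarith [pow_succ (1 - α) r]

/-- Parameter verification for the hard distribution of `UR_dec`: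
with `α = 16/log₂(1/δ) ≤ 1/2`, `t r = ⌈m(1-(1-α)^r) + 2r⌉`, `R = ⌊(1/(16α))·log₂ m⌋`,
and `δ > exp(-m^{3/4})`, the sequence satisfies `t (r+1) - t r ≥ 1` for `r < R-1` and
`t (R-1) < m`. -/
theorem stmt13 (m : ℕ) (hm : 2 ≤ m) (δ : ℝ) (hδ0 : 0 < δ) (hδ1 : δ < 1)
    (α : ℝ) (hα : α = 16 / Real.logb 2 (1 / δ)) (hα2 : α ≤ 1 / 2)
    (R : ℕ) (hR : R = ⌊(1 / (16 * α)) * Real.logb 2 m⌋₊)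
    (t : ℕ → ℤ) (ht : ∀ r : ℕ, t r = ⌈(m : ℝ) * (1 - (1 - α) ^ r) + 2 * r⌉)
    (hδ2 : Real.exp (-(m : ℝ) ^ ((3 : ℝ) / 4)) < δ) :
    (∀ r : ℕ, r < R - 1 → 1 ≤ t (r + 1) - t r) ∧ t (R - 1) < (m : ℤ) := by
  have hℓ : 0 < logb 2 (1 / δ) := logb_pos one_lt_two (one_lt_one_div hδ0 hδ1)
  have hα0 : 0 < α := hα ▸ div_pos (by norm_num) hℓ
  refine ⟨fun r _ => ?_, ?_⟩
  · rw [ht, ht]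
    linarith [ceil_add_two_le_ceil_succ (m.cast_nonneg (α := ℝ)) hα0.le (by linarith) r]
  obtain _ | r := R
  · simp [ht]; omega
  have hm0 : (0 : ℝ) < m := by exact_mod_cast (show 0 < m by omega)
  have hR' : (r + 1 : ℝ) ≤ 1 / (16 * α) * logb 2 m := by
    exact_mod_cast (Nat.le_floor_iff' (n := r + 1) r.succ_ne_zero).1 hR.le
  have hlogδ : log (1 / δ) ≤ (m : ℝ) ^ (3 / 4 : ℝ) := by
    rw [one_div, log_inv, neg_le]
    exact ((lt_log_iff_exp_lt hδ0).2 hδ2).le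
  have hr_small : 2 * (r + 1 : ℝ) ≤ (m : ℝ) ^ (7 / 8 : ℝ) := by
    have := logb_two_mul_logb_two_le_rpow_seven_eighths hm0.le
      (one_le_one_div hδ0 hδ1.le) hlogδ
    have hinv : 1 / (16 * α) = logb 2 (1 / δ) / 256 := by rw [hα]; field_simp; norm_num
    rw [hinv] at hR'
    nlinarith [rpow_nonneg hm0.le (7 / 8 : ℝ)]
  have hr_large : (m : ℝ) ^ (7 / 8 : ℝ) ≤ m * (1 - α) ^ r := by
    refine rpow_seven_eighths_le_mul_one_sub_pow hm0 hα0.le hα2 ?_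
    rw [one_div_mul_eq_div, le_div_iff₀ (by positivity)] at hR'
    nlinarith
  rw [Nat.add_sub_cancel, ht, Int.ceil_lt_iff]
  push_cast
  linarith
end

section
/- Suppose t_0 = 0 < t_1 < ... < t_i ≤ m are integers, k_0,...,k_{i−1} are positive integers with t_{j+1} ≥ t_j + k_j, and t_r satisfies t_r ≥ m(1−(1−α)^r) + 2r − 1 and t_r ≤ m(1−(1−α)^r) + 2r for r_0=0, r_{j+1}=r_j+k_j with α ∈ (0,1/2]. Sample, for each j = 0,...,i−1, a uniformly random set ℬ_j of t_{r_{j+1}} − t_{r_j} − k_j blocks out of the m − t_{r_j} − k_j blocks not yet used. For a fixed subset 𝒯 of t_{r_i} blocks, the probability that every sampled block in every round lies in 𝒯 is at most C(m, t_{r_i})^{−1} · ∏_{j=0}^{i−1} (1/(1−(1−α)^{r_i−r_j}))^{k_j}. -/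
/-!
Write `a j = t (r j)`. In factorials, the `j`-th factor equals `g (j + 1) / g j` times the
falling-factorial ratio `(m - a j)^{(k j)} / (a i - a j)^{(k j)}`, where
`g j = C(m - a j, a i - a j)`; the product therefore telescopes to `C(m, a i)⁻¹` times the
product of these ratios. Each ratio is at most `((m - a j) / (a i - a j - k j))^(k j)`, and the
bounds on `t` give `(m - a j) (1 - (1 - α)^(r i - r j)) ≤ a i - a j - k j`: the slack `2 r - 1`
in the lower bound for `a i` absorbs `k j ≤ r i - r j`.
-/

open Finset

theorem Nat.choose_mul_descFactorial {n s k : ℕ} (hks : k ≤ s) :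
    n.choose s * s.descFactorial k = n.descFactorial k * (n - k).choose (s - k) := by
  rw [descFactorial_eq_factorial_mul_choose, descFactorial_eq_factorial_mul_choose,
    mul_left_comm, Nat.choose_mul hks, mul_assoc]

theorem Nat.choose_sub_mul_choose_mul_descFactorial {n s k l : ℕ} (hkl : k + l ≤ s) :
    (s - k).choose l * n.choose s * s.descFactorial k =
      (n - k).choose l * (n - k - l).choose (s - k - l) * n.descFactorial k := by
  rw [mul_assoc, Nat.choose_mul_descFactorial (by omega), ← Nat.choose_mul (by omega)]
  ring

theorem Nat.cast_choose_sub_div_choose_sub {K : Type*} [Field K] [CharZero K] {n s k l : ℕ}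
    (hkl : k + l ≤ s) (hsn : s ≤ n) :
    ((s - k).choose l : K) / (n - k).choose l =
      (n - k - l).choose (s - k - l) / n.choose s * (n.descFactorial k / s.descFactorial k) := by
  have h₁ : ((n - k).choose l : K) ≠ 0 := Nat.cast_ne_zero.2 (Nat.choose_pos (by omega)).ne'
  have h₂ : (n.choose s : K) ≠ 0 := Nat.cast_ne_zero.2 (Nat.choose_pos hsn).ne'
  have h₃ : (s.descFactorial k : K) ≠ 0 :=
    Nat.cast_ne_zero.2 (Nat.descFactorial_pos.2 (by omega)).ne'
  field_simp
  exact_mod_cast Nat.choose_sub_mul_choose_mul_descFactorial hkl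

theorem Nat.cast_descFactorial_div_le {n s k : ℕ} {c : ℝ} (hc : 0 < c) (hks : k ≤ s)
    (h : n * c ≤ s - k) :
    (n.descFactorial k : ℝ) / s.descFactorial k ≤ (1 / c) ^ k := by
  have hs : (0 : ℝ) < s.descFactorial k := Nat.cast_pos.2 (Nat.descFactorial_pos.2 hks)
  rw [div_le_iff₀ hs, one_div_pow, one_div_mul_eq_div, le_div_iff₀ (pow_pos hc k)]
  calc (n.descFactorial k : ℝ) * c ^ k
      ≤ (n * c) ^ k := by
        rw [mul_pow]; gcongr; exact_mod_cast Nat.descFactorial_le_pow n k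
    _ ≤ ((s + 1 - k : ℕ) : ℝ) ^ k := by
        gcongr
        rw [Nat.cast_sub (by omega)]; push_cast; linarith
    _ ≤ s.descFactorial k := by exact_mod_cast Nat.pow_sub_le_descFactorial s k

theorem Finset.prod_range_div_of_ne_zero {K : Type*} [CommGroupWithZero K] (f : ℕ → K) (n : ℕ)
    (hf : ∀ j ≤ n, f j ≠ 0) : ∏ j ∈ range n, f (j + 1) / f j = f n / f 0 := by
  induction n with
  | zero => simp [div_self (hf 0 le_rfl)]
  | succ n ih =>
    rw [prod_range_succ, ih fun j hj => hf j (by omega), div_mul_div_cancel₀' (hf n (by omega))]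

theorem sub_mul_one_sub_pow_le {m a b q : ℝ} {p n κ : ℕ} (hq0 : 0 ≤ q) (hq1 : q ≤ 1)
    (hκ : 1 ≤ κ) (hpn : p + κ ≤ n) (ha₀ : 0 ≤ a) (ha_lo : m * (1 - q ^ p) + 2 * p - 1 ≤ a)
    (ha_hi : a ≤ m * (1 - q ^ p) + 2 * p) (hb : m * (1 - q ^ n) + 2 * n - 1 ≤ b) :
    (m - a) * (1 - q ^ (n - p)) ≤ b - a - κ := by
  have ha : m - a ≤ m * q ^ p := by
    rcases p.eq_zero_or_pos with rfl | hp
    · simpa using ha₀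
    · have : (1 : ℝ) ≤ p := by exact_mod_cast hp
      linarith
  have hsplit : q ^ n = q ^ p * q ^ (n - p) := by rw [← pow_add]; congr 1; omega
  have hδ : q ^ (n - p) ≤ 1 := pow_le_one₀ hq0 hq1
  have hκn : (p : ℝ) + κ ≤ n := by exact_mod_cast hpn
  have hκ' : (1 : ℝ) ≤ κ := by exact_mod_cast hκ
  calc (m - a) * (1 - q ^ (n - p)) ≤ m * q ^ p * (1 - q ^ (n - p)) := by gcongr
    _ ≤ b - a - κ := by rw [hsplit] at hb; nlinarith

theorem le_of_forall_le_succ {α : Type*} [Preorder α] {a : ℕ → α} {i j : ℕ}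
    (h : ∀ n < i, a n ≤ a (n + 1)) (hj : j ≤ i) : a j ≤ a i :=
  monotoneOn_of_le_succ Set.ordConnected_Iic
    (fun n _ _ hn => by simpa using h n (Order.succ_le_iff.1 hn)) hj Set.self_mem_Iic hj

theorem prod_choose_div_choose_eq {K : Type*} [Field K] [CharZero K] {m i : ℕ} {a k : ℕ → ℕ}
    (hstep : ∀ j < i, a j + k j ≤ a (j + 1)) (him : a i ≤ m) :
    ∏ j ∈ range i, ((a i - a j - k j).choose (a (j + 1) - a j - k j) : K) /
        (m - a j - k j).choose (a (j + 1) - a j - k j) =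
      1 / (m - a 0).choose (a i - a 0) *
        ∏ j ∈ range i, ((m - a j).descFactorial (k j) : K) / (a i - a j).descFactorial (k j) := by
  have hle : ∀ j ≤ i, a j ≤ a i := fun j =>
    le_of_forall_le_succ fun n hn => le_of_add_le_left (hstep n hn)
  set g : ℕ → K := fun j => ((m - a j).choose (a i - a j) : K)
  have hg : ∀ j ≤ i, g j ≠ 0 := fun j hj =>
    Nat.cast_ne_zero.2 (Nat.choose_pos (by have := hle j hj; omega)).ne'
  have hfactor : ∀ j ∈ range i,
      ((a i - a j - k j).choose (a (j + 1) - a j - k j) : K) /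
          (m - a j - k j).choose (a (j + 1) - a j - k j) =
        g (j + 1) / g j * ((m - a j).descFactorial (k j) / (a i - a j).descFactorial (k j)) := by
    intro j hj
    have hj := mem_range.1 hj
    have := hle (j + 1) hj
    have := hstep j hj
    rw [Nat.cast_choose_sub_div_choose_sub (by omega) (by omega)]
    congr 4 <;> omega
  rw [prod_congr rfl hfactor, prod_mul_distrib, prod_range_div_of_ne_zero g i hg]
  simp [g]

/-- core computation of Lemma 3.5: the probability that all randomly
sampled blocks lie in a fixed family `𝒯` of `t (r i)` blocks, which equals
`∏_{j<i} C(t(r i)-t(r j)-k j, t(r (j+1))-t(r j)-k j)/C(m-t(r j)-k j, t(r (j+1))-t(r j)-k j)`,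
is at most `C(m, t(r i))⁻¹ · ∏_{j<i} (1/(1-(1-α)^{r i - r j}))^{k j}`. -/
theorem stmt14 (m i : ℕ) (α : ℝ) (hα0 : 0 < α) (hα1 : α ≤ 1 / 2)
    (k : ℕ → ℕ) (hk : ∀ j, 1 ≤ k j)
    (r : ℕ → ℕ) (hr0 : r 0 = 0) (hr : ∀ j, r (j + 1) = r j + k j)
    (t : ℕ → ℕ)
    (htlo : ∀ j ≤ i, (m : ℝ) * (1 - (1 - α) ^ (r j)) + 2 * (r j) - 1 ≤ (t (r j) : ℝ))
    (hthi : ∀ j ≤ i, (t (r j) : ℝ) ≤ (m : ℝ) * (1 - (1 - α) ^ (r j)) + 2 * (r j))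
    (hstep : ∀ j < i, t (r j) + k j ≤ t (r (j + 1)))
    (htm : t (r i) ≤ m) :
    ∏ j ∈ Finset.range i,
        ((Nat.choose (t (r i) - t (r j) - k j) (t (r (j + 1)) - t (r j) - k j) : ℝ) /
          (Nat.choose (m - t (r j) - k j) (t (r (j + 1)) - t (r j) - k j) : ℝ)) ≤
      (1 / (Nat.choose m (t (r i)) : ℝ)) *
        ∏ j ∈ Finset.range i, (1 / (1 - (1 - α) ^ (r i - r j))) ^ (k j) := by
  have hq0 : 0 ≤ 1 - α := by linarith
  have hq1 : 1 - α < 1 := by linarith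
  have ht0 : t (r 0) = 0 := by
    have h := hthi 0 i.zero_le
    simp only [hr0, pow_zero, sub_self, mul_zero, CharP.cast_eq_zero, add_zero] at h
    rw [hr0]
    exact_mod_cast h.antisymm (Nat.cast_nonneg _)
  have hr_le : ∀ j < i, r j + k j ≤ r i := fun j hj =>
    hr j ▸ le_of_forall_le_succ (fun n _ => (hr n).symm ▸ le_self_add) hj
  calc _ = 1 / (m.choose (t (r i)) : ℝ) * ∏ j ∈ range i,
        ((m - t (r j)).descFactorial (k j) : ℝ) / (t (r i) - t (r j)).descFactorial (k j) := by
        simpa [ht0] using prod_choose_div_choose_eq (K := ℝ) hstep htm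
    _ ≤ _ := by
      gcongr with j hj
      have hj := mem_range.1 hj
      have := le_of_forall_le_succ (j := j + 1) (fun n hn => le_of_add_le_left (hstep n hn)) hj
      have := hstep j hj
      apply Nat.cast_descFactorial_div_le
      · exact sub_pos.2 (pow_lt_one₀ hq0 hq1 (by have := hr_le j hj; have := hk j; omega))
      · omega
      · rw [Nat.cast_sub (by omega), Nat.cast_sub (by omega)]
        exact sub_mul_one_sub_pow_le hq0 hq1.le (hk j) (hr_le j hj) (Nat.cast_nonneg _)
          (htlo j hj.le) (hthi j hj.le) (htlo i le_rfl)
end
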